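/- Let 1/2 < α < 1 and define r(t) = exp(-|t|^(2α)) for t ∈ ℝ. Then r satisfies the strict subadditivity-type inequality r(t-s) + r(0) > r(t) + r(s) for all 0 < s < t. -/
import Mathlib


/-- for `1/2 < α < 1`, the covariance function `r(t) = exp(-|t|^(2α))`
satisfies the strict inequality `r(t-s) + r(0) > r(t) + r(s)` for all `0 < s < t`. -/
theorem exp_cov_strict_subadditive
    (α : ℝ) (hα1 : 1/2 < α) (hα2 : α < 1)
    (r : ℝ → ℝ) (hr : ∀ t : ℝ, r t = Real.exp (-(|t| ^ (2 * α)))) :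
    ∀ s t : ℝ, 0 < s → s < t → r t + r s < r (t - s) + r 0 := by
  intro s t hs hst
  have hβ : 0 < 2 * α := by linarith
  have ht : 0 < t := hs.trans hst
  have hts : 0 < t - s := by linarith
  rw [hr t, hr s, hr (t - s), hr 0, abs_of_pos ht, abs_of_pos hs, abs_of_pos hts]
  simp only [abs_zero, Real.zero_rpow (ne_of_gt hβ), neg_zero, Real.exp_zero]
  set a := s ^ (2 * α) with ha
  set b := t ^ (2 * α) with hb
  have ha0 : 0 < a := Real.rpow_pos_of_pos hs _
  have hb0 : 0 < b := Real.rpow_pos_of_pos ht _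
  have key : Real.exp (-b) + Real.exp (-a) < Real.exp (-(a + b)) + 1 := by
    have h1 : 0 < (1 - Real.exp (-a)) * (1 - Real.exp (-b)) := by
      apply mul_pos <;>
        · have := Real.exp_lt_one_iff.mpr (by linarith : -(_ : ℝ) < 0)
          linarith [Real.exp_lt_one_iff.mpr (neg_neg_iff_pos.mpr ha0),
            Real.exp_lt_one_iff.mpr (neg_neg_iff_pos.mpr hb0)]
    have h2 : Real.exp (-(a + b)) = Real.exp (-a) * Real.exp (-b) := by
      rw [← Real.exp_add]; ring_nf
    nlinarith
  have hle : Real.exp (-(a + b)) ≤ Real.exp (-((t - s) ^ (2 * α))) := by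
    apply Real.exp_le_exp.mpr
    have h3 : (t - s) ^ (2 * α) ≤ b :=
      Real.rpow_le_rpow hts.le (by linarith) hβ.le
    linarith
  linarith
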